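/- arXiv:2309.16819 — 3 statements merged into one kernel-verified Lean document; each statement's English description precedes it below -/
import Mathlib

section
/- The projection Π is Lipschitz from the sup norm to the μ-norm with constant φ_max² · σ_max: for all q, p : X × A → ℝ, ‖Π q − Π p‖_μ ≤ φ_max² · σ_max · ‖q − p‖_∞. -/
open Finset Matrix

variable {X A : Type*}

noncomputable def bellman [Fintype X] [Fintype A] [Nonempty A]
    (P : X → A → X → ℝ) (r : X × A → ℝ) (γ : ℝ) (q : X × A → ℝ) :
    X × A → ℝ :=
  fun z => r z + γ * ∑ x' : X, P z.1 z.2 x' *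
    Finset.univ.sup' Finset.univ_nonempty (fun a' : A => q (x', a'))

noncomputable def supNorm [Fintype X] [Fintype A] [Nonempty X] [Nonempty A]
    (q : X × A → ℝ) : ℝ :=
  Finset.univ.sup' Finset.univ_nonempty (fun z : X × A => |q z|)

noncomputable def munorm [Fintype X] [Fintype A] (μ q : X × A → ℝ) : ℝ :=
  Real.sqrt (∑ z : X × A, μ z * q z ^ 2)

def qlin {k : ℕ} (φ : X × A → Fin k → ℝ) (ω : Fin k → ℝ) : X × A → ℝ :=
  fun z => φ z ⬝ᵥ ω

noncomputable def cov [Fintype X] [Fintype A] {k : ℕ}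
    (μ : X × A → ℝ) (φ : X × A → Fin k → ℝ) : Matrix (Fin k) (Fin k) ℝ :=
  ∑ z : X × A, μ z • Matrix.vecMulVec (φ z) (φ z)

noncomputable def proj [Fintype X] [Fintype A] {k : ℕ}
    (μ : X × A → ℝ) (φ : X × A → Fin k → ℝ) (q : X × A → ℝ) : X × A → ℝ :=
  fun z => φ z ⬝ᵥ (cov μ φ)⁻¹.mulVec (∑ z' : X × A, (μ z' * q z') • φ z')

noncomputable def enorm2 {k : ℕ} (v : Fin k → ℝ) : ℝ :=
  Real.sqrt (∑ i, v i ^ 2)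

noncomputable def phiMax [Fintype X] [Fintype A] [Nonempty X] [Nonempty A]
    {k : ℕ} (φ : X × A → Fin k → ℝ) : ℝ :=
  Finset.univ.sup' Finset.univ_nonempty (fun z : X × A => enorm2 (φ z))

noncomputable def sigmaMax {k : ℕ} (M : Matrix (Fin k) (Fin k) ℝ) : ℝ :=
  ‖LinearMap.toContinuousLinearMap (Matrix.toEuclideanLin M)‖

noncomputable def gmap [Fintype X] [Fintype A] [Nonempty A] {k : ℕ}
    (P : X → A → X → ℝ) (r : X × A → ℝ) (γ : ℝ)
    (μ : X × A → ℝ) (φ : X × A → Fin k → ℝ) (n : ℕ) (ω : Fin k → ℝ) :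
    Fin k → ℝ :=
  ∑ z : X × A, (μ z * ((bellman P r γ)^[n] (qlin φ ω) z - qlin φ ω z)) • φ z

/-! Π is linear, and for each `z` Cauchy–Schwarz together with the operator norm of `Σ⁻¹` gives
`|Π r z| ≤ ‖φ z‖ · σ_max · ‖∑ μ r φ‖ ≤ φ_max² σ_max ‖r‖_∞`, the last step because `μ` is a
probability vector. The μ-norm is a μ-average, so it inherits this pointwise bound. -/

lemma enorm2_eq_norm_toLp {k : ℕ} (v : Fin k → ℝ) : enorm2 v = ‖WithLp.toLp 2 v‖ := by
  simp [enorm2, EuclideanSpace.norm_eq]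

lemma enorm2_nonneg {k : ℕ} (v : Fin k → ℝ) : 0 ≤ enorm2 v := Real.sqrt_nonneg _

lemma abs_dotProduct_le_enorm2_mul {k : ℕ} (u v : Fin k → ℝ) :
    |u ⬝ᵥ v| ≤ enorm2 u * enorm2 v := by
  rw [enorm2_eq_norm_toLp, enorm2_eq_norm_toLp, ← dotProduct_comm]
  exact abs_real_inner_le_norm (WithLp.toLp 2 u) (WithLp.toLp 2 v)

lemma enorm2_mulVec_le {k : ℕ} (M : Matrix (Fin k) (Fin k) ℝ) (v : Fin k → ℝ) :
    enorm2 (M *ᵥ v) ≤ sigmaMax M * enorm2 v := by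
  rw [enorm2_eq_norm_toLp, enorm2_eq_norm_toLp]
  exact (LinearMap.toContinuousLinearMap (toEuclideanLin M)).le_opNorm (WithLp.toLp 2 v)

lemma enorm2_sum_smul_le {k : ℕ} {ι : Type*} (s : Finset ι) (c : ι → ℝ)
    (f : ι → Fin k → ℝ) :
    enorm2 (∑ i ∈ s, c i • f i) ≤ ∑ i ∈ s, |c i| * enorm2 (f i) := by
  simp only [enorm2_eq_norm_toLp, WithLp.toLp_sum, WithLp.toLp_smul]
  refine (norm_sum_le _ _).trans (le_of_eq ?_)
  simp [norm_smul]

lemma sum_mul_le_of_le {ι : Type*} [Fintype ι] {w f : ι → ℝ} {c : ℝ}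
    (hw : ∀ i, 0 ≤ w i) (hw1 : ∑ i, w i = 1) (hf : ∀ i, f i ≤ c) :
    ∑ i, w i * f i ≤ c :=
  calc ∑ i, w i * f i ≤ ∑ i, w i * c := by gcongr with i; exacts [hw i, hf i]
    _ = c := by rw [← sum_mul, hw1, one_mul]

section FiniteStateAction

variable [Fintype X] [Fintype A]

lemma abs_le_supNorm [Nonempty X] [Nonempty A] (q : X × A → ℝ) (z : X × A) :
    |q z| ≤ supNorm q :=
  le_sup' (fun z => |q z|) (mem_univ z)

lemma enorm2_le_phiMax [Nonempty X] [Nonempty A] {k : ℕ} (φ : X × A → Fin k → ℝ)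
    (z : X × A) : enorm2 (φ z) ≤ phiMax φ :=
  le_sup' (fun z => enorm2 (φ z)) (mem_univ z)

lemma munorm_le_of_abs_le {μ q : X × A → ℝ} {c : ℝ} (hμ : ∀ z, 0 ≤ μ z)
    (hμ1 : ∑ z, μ z = 1) (hc : 0 ≤ c) (hq : ∀ z, |q z| ≤ c) : munorm μ q ≤ c := by
  refine Real.sqrt_le_iff.mpr ⟨hc, sum_mul_le_of_le hμ hμ1 fun z => ?_⟩
  rw [← sq_abs]
  exact pow_le_pow_left₀ (abs_nonneg _) (hq z) 2

lemma proj_sub {k : ℕ} (μ : X × A → ℝ) (φ : X × A → Fin k → ℝ) (q p : X × A → ℝ) :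
    proj μ φ q - proj μ φ p = proj μ φ (q - p) := by
  ext z
  simp only [proj, Pi.sub_apply, ← dotProduct_sub, ← mulVec_sub, ← sum_sub_distrib, ← sub_smul,
    ← mul_sub]

lemma enorm2_sum_mul_smul_le [Nonempty X] [Nonempty A] {k : ℕ} {μ : X × A → ℝ}
    (φ : X × A → Fin k → ℝ) (hμ : ∀ z, 0 ≤ μ z) (hμ1 : ∑ z, μ z = 1) (q : X × A → ℝ) :
    enorm2 (∑ z, (μ z * q z) • φ z) ≤ supNorm q * phiMax φ :=
  calc enorm2 (∑ z, (μ z * q z) • φ z) ≤ ∑ z, |μ z * q z| * enorm2 (φ z) :=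
        enorm2_sum_smul_le _ _ _
    _ = ∑ z, μ z * (|q z| * enorm2 (φ z)) := by
        simp only [abs_mul, abs_of_nonneg (hμ _), mul_assoc]
    _ ≤ supNorm q * phiMax φ := sum_mul_le_of_le hμ hμ1 fun z =>
        mul_le_mul (abs_le_supNorm q z) (enorm2_le_phiMax φ z) (enorm2_nonneg _)
          ((abs_nonneg _).trans (abs_le_supNorm q z))

lemma abs_proj_le [Nonempty X] [Nonempty A] {k : ℕ} {μ : X × A → ℝ}
    (φ : X × A → Fin k → ℝ) (hμ : ∀ z, 0 ≤ μ z) (hμ1 : ∑ z, μ z = 1) (q : X × A → ℝ)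
    (z : X × A) :
    |proj μ φ q z| ≤ phiMax φ ^ 2 * sigmaMax (cov μ φ)⁻¹ * supNorm q := by
  have hφ : 0 ≤ phiMax φ := (enorm2_nonneg _).trans (enorm2_le_phiMax φ z)
  calc |proj μ φ q z|
      ≤ enorm2 (φ z) * (sigmaMax (cov μ φ)⁻¹ * enorm2 (∑ z', (μ z' * q z') • φ z')) :=
        (abs_dotProduct_le_enorm2_mul _ _).trans <|
          mul_le_mul_of_nonneg_left (enorm2_mulVec_le _ _) (enorm2_nonneg _)
    _ ≤ phiMax φ * (sigmaMax (cov μ φ)⁻¹ * (supNorm q * phiMax φ)) :=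
        mul_le_mul (enorm2_le_phiMax φ z)
          (mul_le_mul_of_nonneg_left (enorm2_sum_mul_smul_le φ hμ hμ1 q) (norm_nonneg _))
          (mul_nonneg (norm_nonneg _) (enorm2_nonneg _)) hφ
    _ = phiMax φ ^ 2 * sigmaMax (cov μ φ)⁻¹ * supNorm q := by ring

end FiniteStateAction

theorem projection_lipschitz_general
    [Fintype X] [Fintype A] [Nonempty X] [Nonempty A] {k : ℕ}
    (φ : X × A → Fin k → ℝ) (μ : X × A → ℝ) (μmin : ℝ)
    (hμmin : 0 < μmin) (hμ : ∀ z, μmin ≤ μ z) (hμ1 : ∑ z : X × A, μ z = 1)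
    (q p : X × A → ℝ) :
    munorm μ (proj μ φ q - proj μ φ p) ≤
      phiMax φ ^ 2 * sigmaMax (cov μ φ)⁻¹ * supNorm (q - p) := by
  have hμ0 : ∀ z, 0 ≤ μ z := fun z => hμmin.le.trans (hμ z)
  rw [proj_sub]
  refine munorm_le_of_abs_le hμ0 hμ1 ?_ (abs_proj_le φ hμ0 hμ1 (q - p))
  exact (abs_nonneg _).trans (abs_proj_le φ hμ0 hμ1 (q - p) (Classical.arbitrary _))

theorem projection_lipschitz
    [Fintype X] [Fintype A] [Nonempty X] [Nonempty A] {k : ℕ}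
    (φ : X × A → Fin k → ℝ) (μ : X × A → ℝ) (μmin : ℝ)
    (hμmin : 0 < μmin) (hμ : ∀ z, μmin ≤ μ z) (hμ1 : ∑ z : X × A, μ z = 1)
    (hSig : IsUnit (cov μ φ).det)
    (q p : X × A → ℝ) :
    munorm μ (proj μ φ q - proj μ φ p) ≤
      phiMax φ ^ 2 * sigmaMax (cov μ φ)⁻¹ * supNorm (q - p) :=
  projection_lipschitz_general φ μ μmin hμmin hμ hμ1 q p
end

section
/- Let q* satisfy q* = H q*, and let ω* = Σ⁻¹ (∑_z μ(z)·φ(z)·q*(z)) (so that q_{ω*} = Π q*). If (ωₙ)_{n∈ℕ} is a sequence in ℝ^k such that for all sufficiently large n one has q_{ωₙ} = Π(Hⁿ q_{ωₙ}), then lim_{n→∞} ‖ω* − ωₙ‖₂ = 0. -/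
open Finset Matrix

variable {X A : Type*}

/-! The Bellman operator `H` is a `γ`-contraction for the sup metric and fixes `q*`; the maps
`ω ↦ q_ω` and `L : q ↦ Σ⁻¹ ∑ μ q φ` (the coefficients of `Π q`) are linear, hence Lipschitz.
As `Σ` is invertible, `L (q_ω) = ω`, so the hypothesis reads `ωₙ = L (Hⁿ q_{ωₙ})`, while
`ω* = L (Hⁿ q*)`. Hence `‖ωₙ - ω*‖ ≤ c γⁿ (‖q_{ω*} - q*‖ + c' ‖ωₙ - ω*‖)`, and as soon as
`c c' γⁿ ≤ 1/2` this gives `‖ωₙ - ω*‖ ≤ 2 c ‖q_{ω*} - q*‖ γⁿ`. -/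

open Function Filter Topology NNReal

theorem tendsto_zero_of_eventually_le_mul_add {e u : ℕ → ℝ} {B C : ℝ} (he : ∀ n, 0 ≤ e n)
    (hu : Tendsto u atTop (𝓝 0)) (h : ∀ᶠ n in atTop, e n ≤ u n * (C + B * e n)) :
    Tendsto e atTop (𝓝 0) := by
  have hsmall : ∀ᶠ n in atTop, u n * B ≤ 1 / 2 :=
    (by simpa using hu.mul_const B : Tendsto (fun n => u n * B) atTop (𝓝 0)).eventually
      (eventually_le_nhds (by norm_num))
  have hbound : ∀ᶠ n in atTop, e n ≤ 2 * C * u n := by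
    filter_upwards [h, hsmall] with n hn hn'
    nlinarith [mul_le_mul_of_nonneg_right hn' (he n)]
  exact squeeze_zero' (.of_forall he) hbound (by simpa using hu.const_mul (2 * C))

theorem tendsto_of_eventually_eq_comp_iterate_comp {E F : Type*} [PseudoMetricSpace E]
    [MetricSpace F] {g : F → F} {K KL KM : ℝ≥0} (hg : ContractingWith K g) {L : F → E}
    (hL : LipschitzWith KL L) {M : E → F} (hM : LipschitzWith KM M) {q : F} (hq : IsFixedPt g q)
    {ω : ℕ → E} (hω : ∀ᶠ n in atTop, ω n = L (g^[n] (M (ω n)))) :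
    Tendsto ω atTop (𝓝 (L q)) := by
  rw [tendsto_iff_dist_tendsto_zero]
  refine tendsto_zero_of_eventually_le_mul_add (fun _ => dist_nonneg) (B := KM)
    (C := dist (M (L q)) q) (u := fun n => KL * (K : ℝ) ^ n) ?_ ?_
  · simpa using (tendsto_pow_atTop_nhds_zero_of_lt_one K.2 hg.1).const_mul (KL : ℝ)
  filter_upwards [hω] with n hn
  calc dist (ω n) (L q) = dist (L (g^[n] (M (ω n)))) (L (g^[n] q)) := by
        rw [← hn, (hq.iterate n).eq]
    _ ≤ KL * (K ^ n * dist (M (ω n)) q) :=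
        (hL.dist_le_mul _ _).trans (by gcongr; simpa using (hg.2.iterate n).dist_le_mul _ _)
    _ ≤ KL * (K ^ n * (dist (M (L q)) q + KM * dist (ω n) (L q))) := by
        gcongr
        calc dist (M (ω n)) q ≤ dist (M (ω n)) (M (L q)) + dist (M (L q)) q := dist_triangle _ _ _
          _ ≤ KM * dist (ω n) (L q) + dist (M (L q)) q := by gcongr; exact hM.dist_le_mul _ _
          _ = _ := add_comm _ _
    _ = KL * K ^ n * (dist (M (L q)) q + KM * dist (ω n) (L q)) := by ring

theorem abs_sup'_sub_sup'_le {ι : Type*} {s : Finset ι} (hs : s.Nonempty) {f g : ι → ℝ} {c : ℝ}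
    (h : ∀ i ∈ s, |f i - g i| ≤ c) : |s.sup' hs f - s.sup' hs g| ≤ c := by
  rw [abs_sub_le_iff, sub_le_iff_le_add, sub_le_iff_le_add]
  constructor
  · refine sup'_le hs f fun i hi => ?_
    linarith [le_sup' g hi, (abs_sub_le_iff.1 (h i hi)).1]
  · refine sup'_le hs g fun i hi => ?_
    linarith [le_sup' f hi, (abs_sub_le_iff.1 (h i hi)).2]

section Bellman

variable [Fintype X] [Fintype A] [Nonempty A] {P : X → A → X → ℝ} {γ : ℝ}

theorem dist_bellman_le (r : X × A → ℝ) (hγ0 : 0 ≤ γ) (hP0 : ∀ x a x', 0 ≤ P x a x')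
    (hP1 : ∀ x a, ∑ x' : X, P x a x' = 1) (q q' : X × A → ℝ) :
    dist (bellman P r γ q) (bellman P r γ q') ≤ γ * dist q q' := by
  refine (dist_pi_le_iff (by positivity)).2 fun z => ?_
  set V : (X × A → ℝ) → X → ℝ := fun q x' => univ.sup' univ_nonempty fun a => q (x', a)
  have hV : ∀ x', |V q x' - V q' x'| ≤ dist q q' := fun x' =>
    abs_sup'_sub_sup'_le _ fun a _ => by
      simpa only [Real.dist_eq] using dist_le_pi_dist q q' (x', a)
  calc dist (bellman P r γ q z) (bellman P r γ q' z)
      = γ * |∑ x', P z.1 z.2 x' * (V q x' - V q' x')| := by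
        simp only [bellman, Real.dist_eq, V, add_sub_add_left_eq_sub, ← mul_sub, ← sum_sub_distrib,
          abs_mul, abs_of_nonneg hγ0]
    _ ≤ γ * ∑ x', P z.1 z.2 x' * dist q q' := by
        gcongr
        refine (abs_sum_le_sum_abs _ _).trans (sum_le_sum fun x' _ => ?_)
        rw [abs_mul, abs_of_nonneg (hP0 _ _ _)]
        exact mul_le_mul_of_nonneg_left (hV x') (hP0 _ _ _)
    _ = γ * dist q q' := by rw [← sum_mul, hP1, one_mul]

theorem bellman_contractingWith (r : X × A → ℝ) (hγ0 : 0 ≤ γ) (hγ1 : γ < 1)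
    (hP0 : ∀ x a x', 0 ≤ P x a x') (hP1 : ∀ x a, ∑ x' : X, P x a x' = 1) :
    ContractingWith γ.toNNReal (bellman P r γ) :=
  ⟨by simpa using hγ1, .of_dist_le_mul fun q q' => by
    simpa [hγ0] using dist_bellman_le r hγ0 hP0 hP1 q q'⟩

end Bellman

section Projection

variable [Fintype X] [Fintype A] {k : ℕ}

theorem cov_mulVec (μ : X × A → ℝ) (φ : X × A → Fin k → ℝ) (v : Fin k → ℝ) :
    cov μ φ *ᵥ v = ∑ z, (μ z * qlin φ v z) • φ z := by
  ext i
  simp only [cov, mulVec, dotProduct, qlin, Matrix.sum_apply, Matrix.smul_apply, vecMulVec_apply,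
    smul_eq_mul, Finset.sum_apply, Pi.smul_apply, sum_mul, mul_sum]
  rw [sum_comm]
  exact sum_congr rfl fun z _ => sum_congr rfl fun j _ => by ring

noncomputable def projCoeff (μ : X × A → ℝ) (φ : X × A → Fin k → ℝ) :
    (X × A → ℝ) →ₗ[ℝ] (Fin k → ℝ) where
  toFun q := (cov μ φ)⁻¹ *ᵥ ∑ z, (μ z * q z) • φ z
  map_add' q q' := by simp only [Pi.add_apply, mul_add, add_smul, sum_add_distrib, mulVec_add]
  map_smul' c q := by
    simp only [Pi.smul_apply, smul_eq_mul, mul_left_comm _ c, ← smul_smul, ← smul_sum,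
      mulVec_smul, RingHom.id_apply]

theorem proj_eq_qlin_projCoeff (μ : X × A → ℝ) (φ : X × A → Fin k → ℝ) (q : X × A → ℝ) :
    proj μ φ q = qlin φ (projCoeff μ φ q) := rfl

theorem exists_lipschitzWith_qlin (φ : X × A → Fin k → ℝ) : ∃ K, LipschitzWith K (qlin φ) :=
  ⟨_, (Matrix.mulVecLin (Matrix.of φ)).toContinuousLinearMap.lipschitz⟩

theorem projCoeff_qlin {μ : X × A → ℝ} {φ : X × A → Fin k → ℝ} (hSig : IsUnit (cov μ φ).det)
    (v : Fin k → ℝ) : projCoeff μ φ (qlin φ v) = v := by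
  change (cov μ φ)⁻¹ *ᵥ _ = v
  rw [← cov_mulVec, mulVec_mulVec, nonsing_inv_mul _ hSig, one_mulVec]

theorem qlin_injective {μ : X × A → ℝ} {φ : X × A → Fin k → ℝ} (hSig : IsUnit (cov μ φ).det) :
    Injective (qlin φ) :=
  LeftInverse.injective (projCoeff_qlin hSig)

end Projection

theorem fixed_points_converge_to_projection_of_qstar_general
    [Fintype X] [Fintype A] [Nonempty A] {k : ℕ}
    (P : X → A → X → ℝ) (r : X × A → ℝ) (γ : ℝ)
    (hγ0 : 0 ≤ γ) (hγ1 : γ < 1)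
    (hP0 : ∀ x a x', 0 ≤ P x a x') (hP1 : ∀ x a, ∑ x' : X, P x a x' = 1)
    (φ : X × A → Fin k → ℝ) (μ : X × A → ℝ)
    (hSig : IsUnit (cov μ φ).det)
    (qstar : X × A → ℝ) (hq : qstar = bellman P r γ qstar)
    (ωstar : Fin k → ℝ)
    (hωstar : ωstar = (cov μ φ)⁻¹.mulVec (∑ z : X × A, (μ z * qstar z) • φ z))
    (ω : ℕ → Fin k → ℝ)
    (hω : ∃ N : ℕ, ∀ n, N ≤ n →
      qlin φ (ω n) = proj μ φ ((bellman P r γ)^[n] (qlin φ (ω n)))) :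
    Filter.Tendsto (fun n => enorm2 (ωstar - ω n)) Filter.atTop (nhds 0) := by
  obtain ⟨N, hN⟩ := hω
  have hω' : ∀ᶠ n in atTop, ω n = projCoeff μ φ ((bellman P r γ)^[n] (qlin φ (ω n))) :=
    eventually_atTop.2 ⟨N, fun n hn =>
      qlin_injective hSig ((hN n hn).trans (proj_eq_qlin_projCoeff μ φ _))⟩
  obtain ⟨K, hqlin⟩ := exists_lipschitzWith_qlin φ
  have hlim : Tendsto ω atTop (𝓝 ωstar) := hωstar ▸
    tendsto_of_eventually_eq_comp_iterate_comp (bellman_contractingWith r hγ0 hγ1 hP0 hP1)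
      (projCoeff μ φ).toContinuousLinearMap.lipschitz hqlin hq.symm hω'
  have henorm2 : Continuous (enorm2 (k := k)) := by unfold enorm2; fun_prop
  have henorm2_zero : enorm2 (0 : Fin k → ℝ) = 0 := by simp [enorm2]
  simpa [comp_def, henorm2_zero] using
    (henorm2.tendsto _).comp (tendsto_const_nhds (x := ωstar) |>.sub hlim)

theorem fixed_points_converge_to_projection_of_qstar
    [Fintype X] [Fintype A] [Nonempty X] [Nonempty A] {k : ℕ}
    (P : X → A → X → ℝ) (r : X × A → ℝ) (γ : ℝ)
    (hγ0 : 0 ≤ γ) (hγ1 : γ < 1)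
    (hP0 : ∀ x a x', 0 ≤ P x a x') (hP1 : ∀ x a, ∑ x' : X, P x a x' = 1)
    (φ : X × A → Fin k → ℝ) (μ : X × A → ℝ) (μmin : ℝ)
    (hμmin : 0 < μmin) (hμ : ∀ z, μmin ≤ μ z) (hμ1 : ∑ z : X × A, μ z = 1)
    (hSig : IsUnit (cov μ φ).det)
    (qstar : X × A → ℝ) (hq : qstar = bellman P r γ qstar)
    (ωstar : Fin k → ℝ)
    (hωstar : ωstar = (cov μ φ)⁻¹.mulVec (∑ z : X × A, (μ z * qstar z) • φ z))
    (ω : ℕ → Fin k → ℝ)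
    (hω : ∃ N : ℕ, ∀ n, N ≤ n →
      qlin φ (ω n) = proj μ φ ((bellman P r γ)^[n] (qlin φ (ω n)))) :
    Filter.Tendsto (fun n => enorm2 (ωstar - ω n)) Filter.atTop (nhds 0) :=
  fixed_points_converge_to_projection_of_qstar_general P r γ hγ0 hγ1 hP0 hP1 φ μ hSig qstar hq ωstar
    hωstar ω hω
end

section
/- Let λ_min > 0 denote the smallest eigenvalue of the (symmetric positive definite) covariance matrix Σ. For every n ≥ 1, if ω̃ⁿ ∈ ℝ^k satisfies g_n(ω̃ⁿ) = 0, then for all ω ∈ ℝ^k the Lyapunov derivative bound holds: −⟨ω̃ⁿ − ω, g_n(ω)⟩ ≤ ((φ_max² / μ_min) · γⁿ − λ_min) · ‖ω̃ⁿ − ω‖₂², where ⟨·,·⟩ is the Euclidean inner product. -/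
open Finset Matrix

variable {X A : Type*}

/- ### Auxiliary lemmas -/

lemma aux_dot_sum_smul {k : ℕ} {ι : Type*} [Fintype ι] (v : Fin k → ℝ)
    (c : ι → ℝ) (w : ι → Fin k → ℝ) :
    v ⬝ᵥ (∑ z, c z • w z) = ∑ z, c z * (v ⬝ᵥ w z) := by
  simp only [dotProduct, Finset.sum_apply, Pi.smul_apply, smul_eq_mul, Finset.mul_sum]
  rw [Finset.sum_comm]
  refine Finset.sum_congr rfl fun z _ => Finset.sum_congr rfl fun i _ => by ring

lemma aux_abs_dot_le {k : ℕ} (v w : Fin k → ℝ) :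
    |v ⬝ᵥ w| ≤ enorm2 v * enorm2 w := by
  have h := Finset.sum_mul_sq_le_sq_mul_sq Finset.univ v w
  have h1 : |v ⬝ᵥ w| = Real.sqrt ((v ⬝ᵥ w) ^ 2) := (Real.sqrt_sq_eq_abs _).symm
  rw [h1, enorm2, enorm2, ← Real.sqrt_mul (by positivity)]
  exact Real.sqrt_le_sqrt h

lemma aux_abs_sup'_sub {α : Type*} (s : Finset α) (hs : s.Nonempty)
    (f g : α → ℝ) (M : ℝ) (h : ∀ a ∈ s, |f a - g a| ≤ M) :
    |s.sup' hs f - s.sup' hs g| ≤ M := by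
  rw [abs_le]
  constructor
  · rw [neg_le, neg_sub, sub_le_iff_le_add]
    refine Finset.sup'_le _ _ fun a ha => ?_
    have := abs_le.mp (h a ha)
    have h2 : f a ≤ s.sup' hs f := Finset.le_sup' f ha
    linarith
  · rw [sub_le_iff_le_add]
    refine Finset.sup'_le _ _ fun a ha => ?_
    have := abs_le.mp (h a ha)
    have h2 : g a ≤ s.sup' hs g := Finset.le_sup' g ha
    linarith

lemma aux_bellman_contract [Fintype X] [Fintype A] [Nonempty A]
    (P : X → A → X → ℝ) (r : X × A → ℝ) (γ : ℝ) (hγ0 : 0 ≤ γ)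
    (hP0 : ∀ x a x', 0 ≤ P x a x') (hP1 : ∀ x a, ∑ x' : X, P x a x' = 1)
    (q1 q2 : X × A → ℝ) (M : ℝ) (h : ∀ z, |q1 z - q2 z| ≤ M) :
    ∀ z, |bellman P r γ q1 z - bellman P r γ q2 z| ≤ γ * M := by
  intro z
  have hdiff : bellman P r γ q1 z - bellman P r γ q2 z
      = γ * ∑ x' : X, P z.1 z.2 x' *
        (Finset.univ.sup' Finset.univ_nonempty (fun a' : A => q1 (x', a'))
          - Finset.univ.sup' Finset.univ_nonempty (fun a' : A => q2 (x', a'))) := by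
    simp only [bellman]
    have hs : (∑ x' : X, P z.1 z.2 x' *
        (Finset.univ.sup' Finset.univ_nonempty (fun a' : A => q1 (x', a'))
          - Finset.univ.sup' Finset.univ_nonempty (fun a' : A => q2 (x', a'))))
        = (∑ x' : X, P z.1 z.2 x' *
            Finset.univ.sup' Finset.univ_nonempty (fun a' : A => q1 (x', a')))
          - ∑ x' : X, P z.1 z.2 x' *
            Finset.univ.sup' Finset.univ_nonempty (fun a' : A => q2 (x', a')) := by
      rw [← Finset.sum_sub_distrib]
      exact Finset.sum_congr rfl fun x' _ => by ring
    rw [hs]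
    ring
  rw [hdiff, abs_mul, abs_of_nonneg hγ0]
  refine mul_le_mul_of_nonneg_left ?_ hγ0
  calc |∑ x' : X, P z.1 z.2 x' * _| ≤ ∑ x' : X, |P z.1 z.2 x' *
        (Finset.univ.sup' Finset.univ_nonempty (fun a' : A => q1 (x', a'))
          - Finset.univ.sup' Finset.univ_nonempty (fun a' : A => q2 (x', a')))| :=
      Finset.abs_sum_le_sum_abs _ _
    _ ≤ ∑ x' : X, P z.1 z.2 x' * M := by
      refine Finset.sum_le_sum fun x' _ => ?_
      rw [abs_mul, abs_of_nonneg (hP0 _ _ _)]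
      refine mul_le_mul_of_nonneg_left ?_ (hP0 _ _ _)
      exact aux_abs_sup'_sub _ _ _ _ M fun a _ => h (x', a)
    _ = M := by rw [← Finset.sum_mul, hP1, one_mul]

lemma aux_bellman_iter [Fintype X] [Fintype A] [Nonempty A]
    (P : X → A → X → ℝ) (r : X × A → ℝ) (γ : ℝ) (hγ0 : 0 ≤ γ)
    (hP0 : ∀ x a x', 0 ≤ P x a x') (hP1 : ∀ x a, ∑ x' : X, P x a x' = 1)
    (q1 q2 : X × A → ℝ) (M : ℝ) (h : ∀ z, |q1 z - q2 z| ≤ M) :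
    ∀ n z, |(bellman P r γ)^[n] q1 z - (bellman P r γ)^[n] q2 z| ≤ γ ^ n * M := by
  intro n
  induction n with
  | zero => simpa using h
  | succ m ih =>
    intro z
    rw [Function.iterate_succ_apply', Function.iterate_succ_apply']
    have := aux_bellman_contract P r γ hγ0 hP0 hP1 _ _ (γ ^ m * M) ih z
    calc _ ≤ γ * (γ ^ m * M) := this
      _ = γ ^ (m + 1) * M := by ring

lemma aux_dot_cov [Fintype X] [Fintype A] {k : ℕ}
    (μ : X × A → ℝ) (φ : X × A → Fin k → ℝ) (v : Fin k → ℝ) :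
    v ⬝ᵥ (cov μ φ).mulVec v = ∑ z : X × A, μ z * (v ⬝ᵥ φ z) ^ 2 := by
  have h1 : (cov μ φ).mulVec v = ∑ z : X × A, (μ z * (φ z ⬝ᵥ v)) • φ z := by
    rw [cov]
    ext i
    calc ((∑ z : X × A, μ z • Matrix.vecMulVec (φ z) (φ z)).mulVec v) i
        = ∑ j, (∑ z : X × A, μ z * (φ z i * φ z j)) * v j := by
          simp [Matrix.mulVec, dotProduct, Matrix.sum_apply, Matrix.smul_apply,
            Matrix.vecMulVec_apply]
      _ = ∑ j, ∑ z : X × A, μ z * (φ z i * φ z j) * v j := by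
          exact Finset.sum_congr rfl fun j _ => Finset.sum_mul _ _ _
      _ = ∑ z : X × A, ∑ j, μ z * (φ z i * φ z j) * v j := Finset.sum_comm
      _ = ∑ z : X × A, (μ z * (φ z ⬝ᵥ v)) * φ z i := by
          refine Finset.sum_congr rfl fun z _ => ?_
          rw [dotProduct, Finset.mul_sum, Finset.sum_mul]
          exact Finset.sum_congr rfl fun j _ => by ring
      _ = (∑ z : X × A, (μ z * (φ z ⬝ᵥ v)) • φ z) i := by
          simp [Finset.sum_apply]
  rw [h1, aux_dot_sum_smul]
  refine Finset.sum_congr rfl fun z _ => ?_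
  rw [dotProduct_comm (φ z) v]
  ring

lemma quad_lower {k : ℕ} (M : Matrix (Fin k) (Fin k) ℝ) (hM : M.IsHermitian)
    (lam : ℝ) (hlam : ∀ i, lam ≤ hM.eigenvalues i) (d : Fin k → ℝ) :
    lam * ∑ i, d i ^ 2 ≤ d ⬝ᵥ M.mulVec d := by
  classical
  set b := hM.eigenvectorBasis with hb
  set c : Fin k → ℝ := fun i => b.repr (WithLp.toLp 2 d) i with hc
  have hd : ∑ i, c i • (b i : EuclideanSpace ℝ (Fin k)) = WithLp.toLp 2 d := b.sum_repr _
  have hinner : ∀ i, (inner ℝ (b i) (WithLp.toLp 2 d : EuclideanSpace ℝ (Fin k)) : ℝ) = d ⬝ᵥ ⇑(b i) := by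
    intro i
    simp [PiLp.inner_apply, RCLike.inner_apply, dotProduct, mul_comm]
  have hci : ∀ i, c i = d ⬝ᵥ ⇑(b i) := by
    intro i
    have : c i = b.repr (WithLp.toLp 2 d) i := rfl
    rw [this, b.repr_apply_apply]
    exact hinner i
  have h1 : M.mulVec d = ∑ i, (c i * hM.eigenvalues i) • ⇑(b i) := by
    have hd' : d = WithLp.ofLp (∑ i, c i • (b i : EuclideanSpace ℝ (Fin k))) := by rw [hd]
    conv_lhs => rw [hd']
    have : M.mulVec (WithLp.ofLp (∑ i, c i • (b i : EuclideanSpace ℝ (Fin k)))) =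
        ∑ i, c i • M.mulVec ⇑(b i) := by
      rw [WithLp.ofLp_sum]
      show M.mulVecLin _ = _
      rw [map_sum]
      simp only [WithLp.ofLp_smul, _root_.map_smul]
      rfl
    rw [this]
    refine Finset.sum_congr rfl fun i _ => ?_
    rw [hM.mulVec_eigenvectorBasis i, smul_smul]
  have h2 : d ⬝ᵥ M.mulVec d = ∑ i, hM.eigenvalues i * c i ^ 2 := by
    rw [h1]
    have : d ⬝ᵥ (∑ i, (c i * hM.eigenvalues i) • ⇑(b i)) =
        ∑ i, (c i * hM.eigenvalues i) * (d ⬝ᵥ ⇑(b i)) := by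
      simp [dotProduct, Finset.sum_apply, Finset.mul_sum]
      rw [Finset.sum_comm]
      congr 1; ext i; congr 1; ext j; ring
    rw [this]
    refine Finset.sum_congr rfl fun i _ => ?_
    rw [← hci i]; ring
  have h3 : ∑ i, d i ^ 2 = ∑ i, c i ^ 2 := by
    have hpar := b.sum_inner_mul_inner (WithLp.toLp 2 d : EuclideanSpace ℝ (Fin k)) (WithLp.toLp 2 d : EuclideanSpace ℝ (Fin k))
    have hdd : (@inner ℝ (EuclideanSpace ℝ (Fin k)) _ (WithLp.toLp 2 d) (WithLp.toLp 2 d)) = ∑ i, d i ^ 2 := by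
      rw [PiLp.inner_apply]
      simp [RCLike.inner_apply, sq]
    rw [hdd] at hpar
    rw [← hpar]
    refine Finset.sum_congr rfl fun i _ => ?_
    rw [real_inner_comm]
    have : (inner ℝ (b i) (WithLp.toLp 2 d : EuclideanSpace ℝ (Fin k)) : ℝ) = c i := (b.repr_apply_apply _ i).symm
    rw [this, sq]
  rw [h2, h3, Finset.mul_sum]
  exact Finset.sum_le_sum fun i _ => mul_le_mul_of_nonneg_right (hlam i) (sq_nonneg _)

theorem lyapunov_derivative_bound
    [Fintype X] [Fintype A] [Nonempty X] [Nonempty A] {k : ℕ}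
    (P : X → A → X → ℝ) (r : X × A → ℝ) (γ : ℝ)
    (hγ0 : 0 ≤ γ) (hγ1 : γ < 1)
    (hP0 : ∀ x a x', 0 ≤ P x a x') (hP1 : ∀ x a, ∑ x' : X, P x a x' = 1)
    (φ : X × A → Fin k → ℝ) (μ : X × A → ℝ) (μmin : ℝ)
    (hμmin : 0 < μmin) (hμ : ∀ z, μmin ≤ μ z) (hμ1 : ∑ z : X × A, μ z = 1)
    (hSig : IsUnit (cov μ φ).det)
    (hHerm : (cov μ φ).IsHermitian)
    (i₀ : Fin k) (lamMin : ℝ) (hlam : lamMin = hHerm.eigenvalues i₀)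
    (hlamMin : ∀ i : Fin k, lamMin ≤ hHerm.eigenvalues i) (hlamPos : 0 < lamMin)
    (n : ℕ) (hn : 1 ≤ n)
    (ωt : Fin k → ℝ) (hωt : gmap P r γ μ φ n ωt = 0) :
    ∀ ω : Fin k → ℝ,
      -((ωt - ω) ⬝ᵥ gmap P r γ μ φ n ω) ≤
        ((phiMax φ ^ 2 / μmin) * γ ^ n - lamMin) * ∑ i, (ωt i - ω i) ^ 2 := by
  intro ω
  classical
  set S : ℝ := ∑ i, (ωt i - ω i) ^ 2 with hS
  have hS0 : 0 ≤ S := Finset.sum_nonneg fun i _ => sq_nonneg _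
  set D : X × A → ℝ := fun z => (ωt - ω) ⬝ᵥ φ z with hD
  -- basic facts about phiMax
  have hphi_z : ∀ z : X × A, enorm2 (φ z) ≤ phiMax φ := fun z =>
    Finset.le_sup' (fun z : X × A => enorm2 (φ z)) (Finset.mem_univ z)
  have hphi0 : 0 ≤ phiMax φ :=
    le_trans (Real.sqrt_nonneg _) (hphi_z (Classical.arbitrary _))
  -- enorm2 of the difference vector
  have henorm_d : enorm2 (ωt - ω) = Real.sqrt S := by
    rw [enorm2, hS]
    congr 1
  -- bound on D z
  have hDz : ∀ z, |D z| ≤ phiMax φ * Real.sqrt S := by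
    intro z
    calc |D z| ≤ enorm2 (ωt - ω) * enorm2 (φ z) := aux_abs_dot_le _ _
      _ = enorm2 (φ z) * Real.sqrt S := by rw [henorm_d]; ring
      _ ≤ phiMax φ * Real.sqrt S :=
        mul_le_mul_of_nonneg_right (hphi_z z) (Real.sqrt_nonneg _)
  -- the dot product of (ωt - ω) with gmap
  have hdot : ∀ ω' : Fin k → ℝ, (ωt - ω) ⬝ᵥ gmap P r γ μ φ n ω' =
      ∑ z : X × A, (μ z * ((bellman P r γ)^[n] (qlin φ ω') z - qlin φ ω' z)) * D z := by
    intro ω'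
    rw [gmap, aux_dot_sum_smul]
  have h0 : (0:ℝ) = ∑ z : X × A,
      (μ z * ((bellman P r γ)^[n] (qlin φ ωt) z - qlin φ ωt z)) * D z := by
    rw [← hdot ωt, hωt]
    simp [dotProduct]
  -- difference of qlin's
  have hqd : ∀ z, qlin φ ωt z - qlin φ ω z = D z := by
    intro z
    rw [hD]
    simp only [qlin, dotProduct, Pi.sub_apply, ← Finset.sum_sub_distrib]
    exact Finset.sum_congr rfl fun i _ => by ring
  -- key decomposition
  have key : -((ωt - ω) ⬝ᵥ gmap P r γ μ φ n ω) =
      (∑ z : X × A, μ z * ((bellman P r γ)^[n] (qlin φ ωt) z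
          - (bellman P r γ)^[n] (qlin φ ω) z) * D z)
        - ∑ z : X × A, μ z * D z ^ 2 := by
    rw [hdot ω]
    rw [show -(∑ z : X × A, (μ z * ((bellman P r γ)^[n] (qlin φ ω) z - qlin φ ω z)) * D z)
        = (∑ z : X × A, (μ z * ((bellman P r γ)^[n] (qlin φ ωt) z - qlin φ ωt z)) * D z)
          - ∑ z : X × A, (μ z * ((bellman P r γ)^[n] (qlin φ ω) z - qlin φ ω z)) * D z from by
      rw [← h0]; ring]
    rw [← Finset.sum_sub_distrib, ← Finset.sum_sub_distrib]
    refine Finset.sum_congr rfl fun z _ => ?_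
    rw [← hqd z]
    ring
  -- bound the contraction term
  have hcontract : ∀ z, |(bellman P r γ)^[n] (qlin φ ωt) z
      - (bellman P r γ)^[n] (qlin φ ω) z| ≤ γ ^ n * (phiMax φ * Real.sqrt S) := by
    intro z
    refine aux_bellman_iter P r γ hγ0 hP0 hP1 _ _ _ ?_ n z
    intro z'
    rw [hqd z']
    exact hDz z'
  have hT1 : (∑ z : X × A, μ z * ((bellman P r γ)^[n] (qlin φ ωt) z
      - (bellman P r γ)^[n] (qlin φ ω) z) * D z) ≤ γ ^ n * phiMax φ ^ 2 * S := by
    calc (∑ z : X × A, μ z * ((bellman P r γ)^[n] (qlin φ ωt) z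
            - (bellman P r γ)^[n] (qlin φ ω) z) * D z)
        ≤ ∑ z : X × A, μ z * (γ ^ n * phiMax φ ^ 2 * S) := by
          refine Finset.sum_le_sum fun z _ => ?_
          rw [mul_assoc]
          refine mul_le_mul_of_nonneg_left ?_ (le_trans hμmin.le (hμ z))
          calc ((bellman P r γ)^[n] (qlin φ ωt) z
                - (bellman P r γ)^[n] (qlin φ ω) z) * D z
              ≤ |((bellman P r γ)^[n] (qlin φ ωt) z
                - (bellman P r γ)^[n] (qlin φ ω) z) * D z| := le_abs_self _
            _ = |(bellman P r γ)^[n] (qlin φ ωt) z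
                - (bellman P r γ)^[n] (qlin φ ω) z| * |D z| := abs_mul _ _
            _ ≤ (γ ^ n * (phiMax φ * Real.sqrt S)) * (phiMax φ * Real.sqrt S) := by
                refine mul_le_mul (hcontract z) (hDz z) (abs_nonneg _) ?_
                positivity
            _ = γ ^ n * phiMax φ ^ 2 * (Real.sqrt S * Real.sqrt S) := by ring
            _ = γ ^ n * phiMax φ ^ 2 * S := by rw [Real.mul_self_sqrt hS0]
      _ = γ ^ n * phiMax φ ^ 2 * S := by simp [← Finset.sum_mul, hμ1]
  -- μmin ≤ 1
  have hμ1le : μmin ≤ 1 := by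
    have z0 : X × A := Classical.arbitrary _
    calc μmin ≤ μ z0 := hμ z0
      _ ≤ ∑ z : X × A, μ z :=
        Finset.single_le_sum (fun z _ => le_trans hμmin.le (hμ z)) (Finset.mem_univ z0)
      _ = 1 := hμ1
  have hT1' : γ ^ n * phiMax φ ^ 2 * S ≤ (phiMax φ ^ 2 / μmin) * γ ^ n * S := by
    have h1 : phiMax φ ^ 2 ≤ phiMax φ ^ 2 / μmin := by
      rw [le_div_iff₀ hμmin]
      exact mul_le_of_le_one_right (sq_nonneg _) hμ1le
    have h2 : γ ^ n * phiMax φ ^ 2 ≤ γ ^ n * (phiMax φ ^ 2 / μmin) :=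
      mul_le_mul_of_nonneg_left h1 (pow_nonneg hγ0 n)
    calc γ ^ n * phiMax φ ^ 2 * S ≤ γ ^ n * (phiMax φ ^ 2 / μmin) * S :=
          mul_le_mul_of_nonneg_right h2 hS0
      _ = (phiMax φ ^ 2 / μmin) * γ ^ n * S := by ring
  -- bound the quadratic term
  have hT2 : lamMin * S ≤ ∑ z : X × A, μ z * D z ^ 2 := by
    have hq := quad_lower (cov μ φ) hHerm lamMin hlamMin (ωt - ω)
    rw [aux_dot_cov] at hq
    calc lamMin * S = lamMin * ∑ i, ((ωt - ω) i) ^ 2 := by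
          rw [hS]; congr 1
      _ ≤ ∑ z : X × A, μ z * ((ωt - ω) ⬝ᵥ φ z) ^ 2 := hq
      _ = ∑ z : X × A, μ z * D z ^ 2 := rfl
  rw [key]
  calc (∑ z : X × A, μ z * ((bellman P r γ)^[n] (qlin φ ωt) z
          - (bellman P r γ)^[n] (qlin φ ω) z) * D z) - ∑ z : X × A, μ z * D z ^ 2
      ≤ (phiMax φ ^ 2 / μmin) * γ ^ n * S - lamMin * S := by
        have := hT1.trans hT1'
        linarith
    _ = ((phiMax φ ^ 2 / μmin) * γ ^ n - lamMin) * S := by ring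
end
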